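/- arXiv:2310.11956 — 4 statements merged into one kernel-verified Lean document; each statement's English description precedes it below -/
import Mathlib

section
/- Under the 1D SBP hypotheses in each coordinate direction, the two-dimensional tensor-product Laplace operator satisfies the summation-by-parts identity: for all u, v ∈ ℝ^{m_x m_y}, uᵀ (H_x ⊗ H_y) D_L v = −(D_x u)ᵀ (H_x ⊗ H_y) (D_x v) − (D_y u)ᵀ (H_x ⊗ H_y) (D_y v) − uᵀ (R_x ⊗ H_y + H_x ⊗ R_y) v + (e_w u)ᵀ H_y (d_w v) + (e_e u)ᵀ H_y (d_e v) + (e_s u)ᵀ H_x (d_s v) + (e_n u)ᵀ H_x (d_n v). -/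
open Matrix Kronecker

/-- First unit vector e_l = (1,0,…,0)ᵀ in ℝ^{n+2}. -/
noncomputable def eL (n : ℕ) : Fin (n + 2) → ℝ := Pi.single 0 1

/-- Last unit vector e_r = (0,…,0,1)ᵀ in ℝ^{n+2}. -/
noncomputable def eR (n : ℕ) : Fin (n + 2) → ℝ := Pi.single (Fin.last (n + 1)) 1

private theorem mulVec_dot {m n : Type*} [Fintype m] [Fintype n]
    (M : Matrix m n ℝ) (u : n → ℝ) (w : m → ℝ) :
    (M *ᵥ u) ⬝ᵥ w = u ⬝ᵥ (Mᵀ *ᵥ w) := by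
  rw [dotProduct_comm, dotProduct_mulVec, ← mulVec_transpose, dotProduct_comm]

private theorem neg_kronecker' {l m n p : Type*} (A : Matrix l m ℝ) (B : Matrix n p ℝ) :
    (-A) ⊗ₖ B = -(A ⊗ₖ B) := by
  ext i j; simp [kroneckerMap_apply]

private theorem kronecker_neg' {l m n p : Type*} (A : Matrix l m ℝ) (B : Matrix n p ℝ) :
    A ⊗ₖ (-B) = -(A ⊗ₖ B) := by
  ext i j; simp [kroneckerMap_apply]

/-- Two-dimensional tensor-product SBP identity for the discrete Laplace operator. -/
theorem twoD_tensor_laplace_sbp {nx ny : ℕ}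
    -- one-dimensional SBP data in the x-direction
    (Hx D1x D2x Rx : Matrix (Fin (nx + 2)) (Fin (nx + 2)) ℝ)
    (hHx : Hx.PosDef) (hRx : Rx.PosSemidef)
    (dlx drx : Fin (nx + 2) → ℝ)
    (hSBP1x : Hx * D1x + D1xᵀ * Hx =
      -vecMulVec (eL nx) (eL nx) + vecMulVec (eR nx) (eR nx))
    (hSBP2x : Hx * D2x = -(D1xᵀ * Hx * D1x + Rx)
      - vecMulVec (eL nx) dlx + vecMulVec (eR nx) drx)
    -- one-dimensional SBP data in the y-direction
    (Hy D1y D2y Ry : Matrix (Fin (ny + 2)) (Fin (ny + 2)) ℝ)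
    (hHy : Hy.PosDef) (hRy : Ry.PosSemidef)
    (dly dry : Fin (ny + 2) → ℝ)
    (hSBP1y : Hy * D1y + D1yᵀ * Hy =
      -vecMulVec (eL ny) (eL ny) + vecMulVec (eR ny) (eR ny))
    (hSBP2y : Hy * D2y = -(D1yᵀ * Hy * D1y + Ry)
      - vecMulVec (eL ny) dly + vecMulVec (eR ny) dry)
    -- two-dimensional tensor product operators
    (Dx Dy DL Hxy Rterm : Matrix (Fin (nx + 2) × Fin (ny + 2)) (Fin (nx + 2) × Fin (ny + 2)) ℝ)
    (hDx : Dx = D1x ⊗ₖ (1 : Matrix (Fin (ny + 2)) (Fin (ny + 2)) ℝ))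
    (hDy : Dy = (1 : Matrix (Fin (nx + 2)) (Fin (nx + 2)) ℝ) ⊗ₖ D1y)
    (hDL : DL = D2x ⊗ₖ (1 : Matrix (Fin (ny + 2)) (Fin (ny + 2)) ℝ)
      + (1 : Matrix (Fin (nx + 2)) (Fin (nx + 2)) ℝ) ⊗ₖ D2y)
    (hHxy : Hxy = Hx ⊗ₖ Hy)
    (hRterm : Rterm = Rx ⊗ₖ Hy + Hx ⊗ₖ Ry)
    -- boundary restriction operators (e_w = e_lᵀ ⊗ I, etc.)
    (ew ee dw de : Matrix (Fin (ny + 2)) (Fin (nx + 2) × Fin (ny + 2)) ℝ)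
    (es en ds dn : Matrix (Fin (nx + 2)) (Fin (nx + 2) × Fin (ny + 2)) ℝ)
    (hew : ew = Matrix.of fun i p => eL nx p.1 * (if p.2 = i then 1 else 0))
    (hee : ee = Matrix.of fun i p => eR nx p.1 * (if p.2 = i then 1 else 0))
    (hdw : dw = Matrix.of fun i p => -(dlx p.1 * (if p.2 = i then 1 else 0)))
    (hde : de = Matrix.of fun i p => drx p.1 * (if p.2 = i then 1 else 0))
    (hes : es = Matrix.of fun i p => (if p.1 = i then 1 else 0) * eL ny p.2)
    (hen : en = Matrix.of fun i p => (if p.1 = i then 1 else 0) * eR ny p.2)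
    (hds : ds = Matrix.of fun i p => -((if p.1 = i then 1 else 0) * dly p.2))
    (hdn : dn = Matrix.of fun i p => (if p.1 = i then 1 else 0) * dry p.2) :
    ∀ u v : Fin (nx + 2) × Fin (ny + 2) → ℝ,
      u ⬝ᵥ (Hxy * DL) *ᵥ v =
        -((Dx *ᵥ u) ⬝ᵥ Hxy *ᵥ (Dx *ᵥ v)) - ((Dy *ᵥ u) ⬝ᵥ Hxy *ᵥ (Dy *ᵥ v))
        - u ⬝ᵥ Rterm *ᵥ v
        + (ew *ᵥ u) ⬝ᵥ Hy *ᵥ (dw *ᵥ v) + (ee *ᵥ u) ⬝ᵥ Hy *ᵥ (de *ᵥ v)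
        + (es *ᵥ u) ⬝ᵥ Hx *ᵥ (ds *ᵥ v) + (en *ᵥ u) ⬝ᵥ Hx *ᵥ (dn *ᵥ v) := by
  intro u v
  -- express the boundary contributions as Kronecker products
  have hbw : ewᵀ * Hy * dw = (-(vecMulVec (eL nx) dlx)) ⊗ₖ Hy := by
    subst hew hdw
    ext p q
    simp [Matrix.mul_apply, kroneckerMap_apply, vecMulVec_apply, mul_comm, mul_left_comm]
  have hbe : eeᵀ * Hy * de = (vecMulVec (eR nx) drx) ⊗ₖ Hy := by
    subst hee hde
    ext p q
    simp [Matrix.mul_apply, kroneckerMap_apply, vecMulVec_apply, mul_comm, mul_left_comm]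
  have hbs : esᵀ * Hx * ds = Hx ⊗ₖ (-(vecMulVec (eL ny) dly)) := by
    subst hes hds
    ext p q
    simp [Matrix.mul_apply, kroneckerMap_apply, vecMulVec_apply, mul_comm, mul_left_comm]
  have hbn : enᵀ * Hx * dn = Hx ⊗ₖ (vecMulVec (eR ny) dry) := by
    subst hen hdn
    ext p q
    simp [Matrix.mul_apply, kroneckerMap_apply, vecMulVec_apply, mul_comm, mul_left_comm]
  -- key matrix identity
  have key : Hxy * DL =
      -(Dxᵀ * Hxy * Dx) - (Dyᵀ * Hxy * Dy) - Rterm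
      + ewᵀ * Hy * dw + eeᵀ * Hy * de + esᵀ * Hx * ds + enᵀ * Hx * dn := by
    rw [hbw, hbe, hbs, hbn]
    subst hDx hDy hHxy hRterm hDL
    rw [Matrix.mul_add, ← mul_kronecker_mul, ← mul_kronecker_mul,
      ← kroneckerMap_transpose, ← kroneckerMap_transpose,
      ← mul_kronecker_mul, ← mul_kronecker_mul, ← mul_kronecker_mul, ← mul_kronecker_mul]
    simp only [Matrix.mul_one, Matrix.one_mul, Matrix.transpose_one]
    rw [hSBP2x, hSBP2y]
    simp only [sub_eq_add_neg, add_kronecker, kronecker_add, neg_kronecker', kronecker_neg',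
      neg_add_rev, neg_neg]
    abel
  -- translate the bilinear forms into matrix products
  rw [show (Dx *ᵥ u) ⬝ᵥ Hxy *ᵥ (Dx *ᵥ v) = u ⬝ᵥ (Dxᵀ * Hxy * Dx) *ᵥ v by
      rw [mulVec_dot, ← mulVec_mulVec, ← mulVec_mulVec],
    show (Dy *ᵥ u) ⬝ᵥ Hxy *ᵥ (Dy *ᵥ v) = u ⬝ᵥ (Dyᵀ * Hxy * Dy) *ᵥ v by
      rw [mulVec_dot, ← mulVec_mulVec, ← mulVec_mulVec],
    show (ew *ᵥ u) ⬝ᵥ Hy *ᵥ (dw *ᵥ v) = u ⬝ᵥ (ewᵀ * Hy * dw) *ᵥ v by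
      rw [mulVec_dot, ← mulVec_mulVec, ← mulVec_mulVec],
    show (ee *ᵥ u) ⬝ᵥ Hy *ᵥ (de *ᵥ v) = u ⬝ᵥ (eeᵀ * Hy * de) *ᵥ v by
      rw [mulVec_dot, ← mulVec_mulVec, ← mulVec_mulVec],
    show (es *ᵥ u) ⬝ᵥ Hx *ᵥ (ds *ᵥ v) = u ⬝ᵥ (esᵀ * Hx * ds) *ᵥ v by
      rw [mulVec_dot, ← mulVec_mulVec, ← mulVec_mulVec],
    show (en *ᵥ u) ⬝ᵥ Hx *ᵥ (dn *ᵥ v) = u ⬝ᵥ (enᵀ * Hx * dn) *ᵥ v by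
      rw [mulVec_dot, ← mulVec_mulVec, ← mulVec_mulVec],
    key]
  simp only [sub_eq_add_neg, Matrix.add_mulVec, Matrix.neg_mulVec, dotProduct_add,
    dotProduct_neg]
end

section
/- In the two-block SBP setting, the operator D = c² P (blockdiag(D_L⁺, D_L⁻) + SAT_{BC1} + SAT_{IC}) P is self-adjoint with respect to H̄, i.e. H̄ D = Dᵀ H̄, equivalently (u, D v)_{H̄} = (D u, v)_{H̄} for all u, v ∈ ℝ^N. -/
open Matrix

private lemma bilin_ext {n : ℕ} {A B : Matrix (Fin n) (Fin n) ℝ}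
    (h : ∀ u v : Fin n → ℝ, u ⬝ᵥ A *ᵥ v = u ⬝ᵥ B *ᵥ v) : A = B := by
  ext i j
  have := h (Pi.single i 1) (Pi.single j 1)
  simpa [Matrix.mulVec_single, Pi.single_apply, dotProduct] using this

private lemma dp_form {m n : ℕ} (M : Matrix (Fin m) (Fin n) ℝ) (H : Matrix (Fin m) (Fin m) ℝ)
    (N : Matrix (Fin m) (Fin n) ℝ) (u v : Fin n → ℝ) :
    (M *ᵥ u) ⬝ᵥ H *ᵥ (N *ᵥ v) = u ⬝ᵥ (Mᵀ * H * N) *ᵥ v := by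
  rw [← Matrix.mulVec_mulVec, ← Matrix.mulVec_mulVec, Matrix.dotProduct_mulVec u,
    Matrix.vecMul_transpose]

/-- In the two-block SBP setting, D is self-adjoint with respect to H̄. -/
theorem twoBlock_D_selfAdjoint
    {Np Nm : ℕ} (hNp : 0 < Np) (hNm : 0 < Nm)
    {mwp mep msp mnp mwm mem msm : ℕ}
    (hmwp : 0 < mwp) (hmep : 0 < mep) (hmsp : 0 < msp) (hmnp : 0 < mnp)
    (hmwm : 0 < mwm) (hmem : 0 < mem) (hmsm : 0 < msm)
    (Hp DLp Dxp Dyp Rp : Matrix (Fin Np) (Fin Np) ℝ)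
    (Hm DLm Dxm Dym Rm : Matrix (Fin Nm) (Fin Nm) ℝ)
    (hHp : Hp.PosDef) (hHm : Hm.PosDef) (hRp : Rp.IsSymm) (hRm : Rm.IsSymm)
    (ewp dwp : Matrix (Fin mwp) (Fin Np) ℝ) (Hwp : Matrix (Fin mwp) (Fin mwp) ℝ)
    (eep dep : Matrix (Fin mep) (Fin Np) ℝ) (Hep : Matrix (Fin mep) (Fin mep) ℝ)
    (esp dsp : Matrix (Fin msp) (Fin Np) ℝ) (Hsp : Matrix (Fin msp) (Fin msp) ℝ)
    (enp dnp : Matrix (Fin mnp) (Fin Np) ℝ) (Hnp : Matrix (Fin mnp) (Fin mnp) ℝ)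
    (ewm dwm : Matrix (Fin mwm) (Fin Nm) ℝ) (Hwm : Matrix (Fin mwm) (Fin mwm) ℝ)
    (eem dem : Matrix (Fin mem) (Fin Nm) ℝ) (Hem : Matrix (Fin mem) (Fin mem) ℝ)
    (esm dsm : Matrix (Fin msm) (Fin Nm) ℝ) (Hsm : Matrix (Fin msm) (Fin msm) ℝ)
    -- interface matching: m_n⁻ = m_s⁺ (same row dimension) and H_n⁻ = H_s⁺
    (enm dnm : Matrix (Fin msp) (Fin Nm) ℝ) (Hnm : Matrix (Fin msp) (Fin msp) ℝ)
    (hHwp : Hwp.IsSymm) (hHep : Hep.IsSymm) (hHsp : Hsp.IsSymm) (hHnp : Hnp.IsSymm)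
    (hHwm : Hwm.IsSymm) (hHem : Hem.IsSymm) (hHsm : Hsm.IsSymm) (hHnm : Hnm.IsSymm)
    (hmatch : Hsp = Hnm)
    (hSBPp : ∀ u v : Fin Np → ℝ,
      u ⬝ᵥ (Hp * DLp) *ᵥ v =
        -((Dxp *ᵥ u) ⬝ᵥ Hp *ᵥ (Dxp *ᵥ v)) - ((Dyp *ᵥ u) ⬝ᵥ Hp *ᵥ (Dyp *ᵥ v))
        - u ⬝ᵥ Rp *ᵥ v
        + (ewp *ᵥ u) ⬝ᵥ Hwp *ᵥ (dwp *ᵥ v) + (eep *ᵥ u) ⬝ᵥ Hep *ᵥ (dep *ᵥ v)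
        + (esp *ᵥ u) ⬝ᵥ Hsp *ᵥ (dsp *ᵥ v) + (enp *ᵥ u) ⬝ᵥ Hnp *ᵥ (dnp *ᵥ v))
    (hSBPm : ∀ u v : Fin Nm → ℝ,
      u ⬝ᵥ (Hm * DLm) *ᵥ v =
        -((Dxm *ᵥ u) ⬝ᵥ Hm *ᵥ (Dxm *ᵥ v)) - ((Dym *ᵥ u) ⬝ᵥ Hm *ᵥ (Dym *ᵥ v))
        - u ⬝ᵥ Rm *ᵥ v
        + (ewm *ᵥ u) ⬝ᵥ Hwm *ᵥ (dwm *ᵥ v) + (eem *ᵥ u) ⬝ᵥ Hem *ᵥ (dem *ᵥ v)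
        + (esm *ᵥ u) ⬝ᵥ Hsm *ᵥ (dsm *ᵥ v) + (enm *ᵥ u) ⬝ᵥ Hnm *ᵥ (dnm *ᵥ v))
    (c : ℝ)
    (Hbar : Matrix (Fin Np ⊕ Fin Nm) (Fin Np ⊕ Fin Nm) ℝ)
    (hHbar : Hbar = fromBlocks Hp 0 0 Hm)
    (L : Matrix (Fin mnp ⊕ Fin msp) (Fin Np ⊕ Fin Nm) ℝ)
    (hL : L = fromBlocks enp 0 esp (-enm))
    (hLHL : IsUnit (L * Hbar⁻¹ * Lᵀ))
    (P : Matrix (Fin Np ⊕ Fin Nm) (Fin Np ⊕ Fin Nm) ℝ)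
    (hP : P = 1 - Hbar⁻¹ * Lᵀ * (L * Hbar⁻¹ * Lᵀ)⁻¹ * L)
    (SATBC1 SATBC2 SATIC : Matrix (Fin Np ⊕ Fin Nm) (Fin Np ⊕ Fin Nm) ℝ)
    (hSATBC1 : SATBC1 = -(Hbar⁻¹ *
      (fromBlocks (ewpᵀ * Hwp * dwp) 0 0 (ewmᵀ * Hwm * dwm)
        + fromBlocks (eepᵀ * Hep * dep) 0 0 (eemᵀ * Hem * dem)
        + fromBlocks 0 0 0 (esmᵀ * Hsm * dsm))))
    (hSATIC : SATIC = -(Hbar⁻¹ *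
      fromBlocks (espᵀ * Hsp * dsp) (espᵀ * Hsp * dnm) 0 0))
    (hSATBC2 : SATBC2 = -(Hbar⁻¹ *
      (fromBlocks (ewpᵀ * Hwp * ewp) 0 0 (ewmᵀ * Hwm * ewm)
        + fromBlocks (eepᵀ * Hep * eep) 0 0 (eemᵀ * Hem * eem))))
    (D E : Matrix (Fin Np ⊕ Fin Nm) (Fin Np ⊕ Fin Nm) ℝ)
    (hD : D = (c ^ 2) • (P * (fromBlocks DLp 0 0 DLm + SATBC1 + SATIC) * P))
    (hE : E = c • (P * SATBC2 * P))
    :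
    Hbar * D = Dᵀ * Hbar ∧
    ∀ u v : Fin Np ⊕ Fin Nm → ℝ, u ⬝ᵥ Hbar *ᵥ (D *ᵥ v) = (D *ᵥ u) ⬝ᵥ Hbar *ᵥ v := by
  -- symmetry of Hp, Hm
  have hHpT : Hpᵀ = Hp := by
    have := hHp.isHermitian
    rwa [Matrix.IsHermitian, Matrix.conjTranspose_eq_transpose_of_trivial] at this
  have hHmT : Hmᵀ = Hm := by
    have := hHm.isHermitian
    rwa [Matrix.IsHermitian, Matrix.conjTranspose_eq_transpose_of_trivial] at this
  -- Hbar facts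
  have hHbarT : Hbarᵀ = Hbar := by
    rw [hHbar, Matrix.fromBlocks_transpose, hHpT, hHmT]; simp
  have hHbarDet : IsUnit Hbar.det := by
    rw [hHbar, Matrix.det_fromBlocks_zero₂₁]
    exact (isUnit_iff_ne_zero.mpr (ne_of_gt hHp.det_pos)).mul
      (isUnit_iff_ne_zero.mpr (ne_of_gt hHm.det_pos))
  have hHinvT : (Hbar⁻¹)ᵀ = Hbar⁻¹ := by
    rw [Matrix.transpose_nonsing_inv, hHbarT]
  -- Schur complement S
  set S : Matrix (Fin mnp ⊕ Fin msp) (Fin mnp ⊕ Fin msp) ℝ := L * Hbar⁻¹ * Lᵀ with hS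
  have hSdet : IsUnit S.det := (Matrix.isUnit_iff_isUnit_det S).mp hLHL
  have hSinv : S * S⁻¹ = 1 := Matrix.mul_nonsing_inv S hSdet
  have hST : Sᵀ = S := by
    rw [hS, Matrix.transpose_mul, Matrix.transpose_mul, hHinvT, Matrix.transpose_transpose,
      Matrix.mul_assoc]
  have hSinvT : (S⁻¹)ᵀ = S⁻¹ := by rw [Matrix.transpose_nonsing_inv, hST]
  -- L * P = 0
  have hLP : L * P = 0 := by
    rw [hP, Matrix.mul_sub, Matrix.mul_one]
    have h0 : L * (Hbar⁻¹ * Lᵀ * S⁻¹ * L) = (L * Hbar⁻¹ * Lᵀ) * S⁻¹ * L := by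
      simp only [Matrix.mul_assoc]
    rw [h0, ← hS, hSinv, Matrix.one_mul, sub_self]
  -- Hbar * P = Pᵀ * Hbar
  have hHPsym : Hbar * P = Pᵀ * Hbar := by
    have h1 : Hbar * P = Hbar - Lᵀ * S⁻¹ * L := by
      rw [hP, Matrix.mul_sub, Matrix.mul_one]
      rw [show Hbar * (Hbar⁻¹ * Lᵀ * S⁻¹ * L) = Hbar * Hbar⁻¹ * (Lᵀ * S⁻¹ * L) from by
          simp only [Matrix.mul_assoc],
        Matrix.mul_nonsing_inv _ hHbarDet, Matrix.one_mul]
    have h2 : Pᵀ * Hbar = Hbar - Lᵀ * S⁻¹ * L := by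
      rw [hP, Matrix.transpose_sub, Matrix.transpose_one, Matrix.sub_mul, Matrix.one_mul]
      congr 1
      rw [Matrix.transpose_mul, Matrix.transpose_mul, Matrix.transpose_mul, hHinvT, hSinvT,
        Matrix.transpose_transpose]
      rw [show Lᵀ * (S⁻¹ * (L * Hbar⁻¹)) * Hbar = Lᵀ * S⁻¹ * L * (Hbar⁻¹ * Hbar) from by
          simp only [Matrix.mul_assoc],
        Matrix.nonsing_inv_mul _ hHbarDet, Matrix.mul_one]
    rw [h1, h2]
  -- matrix-level SBP identities
  have hMp : Hp * DLp =
      -(Dxpᵀ * Hp * Dxp) - Dypᵀ * Hp * Dyp - Rp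
      + ewpᵀ * Hwp * dwp + eepᵀ * Hep * dep + espᵀ * Hsp * dsp + enpᵀ * Hnp * dnp := by
    apply bilin_ext
    intro u v
    rw [hSBPp u v, dp_form, dp_form, dp_form, dp_form, dp_form, dp_form]
    simp only [Matrix.add_mulVec, Matrix.sub_mulVec, Matrix.neg_mulVec, dotProduct_add,
      dotProduct_sub, dotProduct_neg]
  have hMm : Hm * DLm =
      -(Dxmᵀ * Hm * Dxm) - Dymᵀ * Hm * Dym - Rm
      + ewmᵀ * Hwm * dwm + eemᵀ * Hem * dem + esmᵀ * Hsm * dsm + enmᵀ * Hnm * dnm := by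
    apply bilin_ext
    intro u v
    rw [hSBPm u v, dp_form, dp_form, dp_form, dp_form, dp_form, dp_form]
    simp only [Matrix.add_mulVec, Matrix.sub_mulVec, Matrix.neg_mulVec, dotProduct_add,
      dotProduct_sub, dotProduct_neg]
  -- the symmetric part
  set Sym : Matrix (Fin Np ⊕ Fin Nm) (Fin Np ⊕ Fin Nm) ℝ :=
    fromBlocks (-(Dxpᵀ * Hp * Dxp) - Dypᵀ * Hp * Dyp - Rp) 0 0
      (-(Dxmᵀ * Hm * Dxm) - Dymᵀ * Hm * Dym - Rm) with hSymDef
  have hSymT : Symᵀ = Sym := by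
    have h11 : (-(Dxpᵀ * Hp * Dxp) - Dypᵀ * Hp * Dyp - Rp)ᵀ
        = -(Dxpᵀ * Hp * Dxp) - Dypᵀ * Hp * Dyp - Rp := by
      rw [Matrix.transpose_sub, Matrix.transpose_sub, Matrix.transpose_neg,
        Matrix.transpose_mul, Matrix.transpose_mul, Matrix.transpose_mul, Matrix.transpose_mul,
        Matrix.transpose_transpose, Matrix.transpose_transpose, hHpT, hRp.eq,
        Matrix.mul_assoc, Matrix.mul_assoc]
    have h22 : (-(Dxmᵀ * Hm * Dxm) - Dymᵀ * Hm * Dym - Rm)ᵀ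
        = -(Dxmᵀ * Hm * Dxm) - Dymᵀ * Hm * Dym - Rm := by
      rw [Matrix.transpose_sub, Matrix.transpose_sub, Matrix.transpose_neg,
        Matrix.transpose_mul, Matrix.transpose_mul, Matrix.transpose_mul, Matrix.transpose_mul,
        Matrix.transpose_transpose, Matrix.transpose_transpose, hHmT, hRm.eq,
        Matrix.mul_assoc, Matrix.mul_assoc]
    rw [hSymDef, Matrix.fromBlocks_transpose, h11, h22]; simp
  -- the interface remainder
  set W : Matrix (Fin mnp ⊕ Fin msp) (Fin Np ⊕ Fin Nm) ℝ :=
    fromBlocks (Hnp * dnp) 0 0 (-(Hsp * dnm)) with hWdef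
  set M : Matrix (Fin Np ⊕ Fin Nm) (Fin Np ⊕ Fin Nm) ℝ :=
    fromBlocks DLp 0 0 DLm + SATBC1 + SATIC with hMdef
  have hkey : Hbar * M = Sym + Lᵀ * W := by
    rw [hMdef, hSATBC1, hSATIC, Matrix.mul_add, Matrix.mul_add, Matrix.mul_neg, Matrix.mul_neg,
      Matrix.mul_nonsing_inv_cancel_left _ _ hHbarDet,
      Matrix.mul_nonsing_inv_cancel_left _ _ hHbarDet,
      hHbar, hL, hSymDef, hWdef, Matrix.fromBlocks_transpose]
    simp only [Matrix.fromBlocks_multiply, Matrix.fromBlocks_add, Matrix.fromBlocks_neg,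
      Matrix.mul_zero, Matrix.zero_mul, add_zero, zero_add, Matrix.mul_neg,
      Matrix.neg_mul, Matrix.transpose_neg, neg_zero, Matrix.transpose_zero, neg_neg]
    rw [Matrix.fromBlocks_inj]
    refine ⟨?_, ?_, rfl, ?_⟩
    · rw [hMp]; simp only [← Matrix.mul_assoc]; abel
    · simp only [Matrix.mul_assoc]
    · rw [hMm, hmatch]; simp only [← Matrix.mul_assoc]; abel
  -- conclude
  have main : Hbar * D = Dᵀ * Hbar := by
    rw [hD, Matrix.mul_smul, Matrix.transpose_smul, Matrix.smul_mul]
    congr 1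
    have lhs : Hbar * (P * M * P) = Pᵀ * Sym * P := by
      rw [show Hbar * (P * M * P) = (Hbar * P) * M * P from by simp only [Matrix.mul_assoc], hHPsym,
        show Pᵀ * Hbar * M * P = Pᵀ * (Hbar * M) * P from by simp only [Matrix.mul_assoc], hkey,
        Matrix.mul_add, Matrix.add_mul,
        show Pᵀ * (Lᵀ * W) = (L * P)ᵀ * W from by rw [Matrix.transpose_mul]; simp only [Matrix.mul_assoc],
        hLP]
      simp
    have rhs : (P * M * P)ᵀ * Hbar = Pᵀ * Sym * P := by
      rw [Matrix.transpose_mul, Matrix.transpose_mul,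
        show Pᵀ * (Mᵀ * Pᵀ) * Hbar = Pᵀ * Mᵀ * (Pᵀ * Hbar) from by simp only [Matrix.mul_assoc], ← hHPsym,
        show Pᵀ * Mᵀ * (Hbar * P) = Pᵀ * (Mᵀ * Hbar) * P from by simp only [Matrix.mul_assoc],
        show Mᵀ * Hbar = (Hbar * M)ᵀ from by rw [Matrix.transpose_mul, hHbarT],
        hkey, Matrix.transpose_add, hSymT, Matrix.transpose_mul, Matrix.transpose_transpose,
        Matrix.mul_add, Matrix.add_mul,
        show Pᵀ * (Wᵀ * L) * P = Pᵀ * Wᵀ * (L * P) from by simp only [Matrix.mul_assoc], hLP]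
      simp
    rw [lhs, rhs]
  refine ⟨main, fun u v => ?_⟩
  rw [Matrix.mulVec_mulVec, main, ← Matrix.mulVec_mulVec, Matrix.dotProduct_mulVec u,
    Matrix.vecMul_transpose]
end

section
/- In the two-block SBP setting, if additionally R⁺ and R⁻ are positive semidefinite, then for all u, v ∈ ℝ^N one has uᵀ H̄ D v = −c² Σ_{σ∈{+,−}} [ (D_x^σ (Pu)^σ)ᵀ H^σ (D_x^σ (Pv)^σ) + (D_y^σ (Pu)^σ)ᵀ H^σ (D_y^σ (Pv)^σ) + ((Pu)^σ)ᵀ R^σ (Pv)^σ ]; in particular (u, D u)_{H̄} ≤ 0 for every u ∈ ℝ^N, i.e. −D is positive semidefinite with respect to H̄. -/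
/-!
`P` is the `H̄`-orthogonal projection onto `ker L`, so `H̄ P = Pᵀ H̄` and the form `uᵀ H̄ D v` is
`c²` times the form of `H̄ (D_L + SAT_BC1 + SAT_IC)` at `(Pu, Pv)`. On each block the SBP identity
turns that form into minus the energy plus boundary terms. The SATs cancel the west, east and
south terms; the north term of the `+` block vanishes because `e_n⁺ (Pu)⁺ = 0`, and the interface
SAT cancels the north term of the `−` block because `e_s⁺ (Pu)⁺ = e_n⁻ (Pu)⁻` and `H_s⁺ = H_n⁻`.
-/

open Matrix

namespace Matrix

section CommRing

variable {R : Type*} [CommRing R] {l m n o : Type*} [Fintype m] [Fintype n]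

theorem dotProduct_transpose_mul_mul_mulVec [Fintype l] (A : Matrix l m R) (W : Matrix l l R)
    (B : Matrix l n R) (x : m → R) (y : n → R) :
    x ⬝ᵥ (Aᵀ * W * B) *ᵥ y = (A *ᵥ x) ⬝ᵥ W *ᵥ (B *ᵥ y) := by
  rw [← mulVec_mulVec, ← mulVec_mulVec, dotProduct_mulVec, vecMul_transpose]

theorem dotProduct_fromBlocks_mulVec (A : Matrix m m R) (B : Matrix m n R)
    (C : Matrix n m R) (D : Matrix n n R) (x y : m ⊕ n → R) :
    x ⬝ᵥ fromBlocks A B C D *ᵥ y =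
      (x ∘ Sum.inl) ⬝ᵥ A *ᵥ (y ∘ Sum.inl) + (x ∘ Sum.inl) ⬝ᵥ B *ᵥ (y ∘ Sum.inr)
        + (x ∘ Sum.inr) ⬝ᵥ C *ᵥ (y ∘ Sum.inl) + (x ∘ Sum.inr) ⬝ᵥ D *ᵥ (y ∘ Sum.inr) := by
  rw [fromBlocks_mulVec, ← Sum.elim_comp_inl_inr x, sumElim_dotProduct_sumElim]
  simp only [dotProduct_add, Sum.elim_comp_inl, Sum.elim_comp_inr]
  ring

theorem fromBlocks_zero_neg_mulVec_eq_zero_iff (A : Matrix l m R) (C : Matrix o m R)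
    (D : Matrix o n R) (w : m ⊕ n → R) :
    fromBlocks A 0 C (-D) *ᵥ w = 0 ↔
      A *ᵥ (w ∘ Sum.inl) = 0 ∧ C *ᵥ (w ∘ Sum.inl) = D *ᵥ (w ∘ Sum.inr) := by
  simp only [fromBlocks_mulVec, funext_iff, Sum.forall, Sum.elim_inl, Sum.elim_inr, zero_mulVec,
    neg_mulVec, Pi.zero_apply, add_zero, ← sub_eq_add_neg, Pi.sub_apply, sub_eq_zero]

theorem dotProduct_mul_mul_mul_mulVec_of_transpose_mul_comm {H P : Matrix n n R}
    (hP : Pᵀ * H = H * P) (X : Matrix n n R) (u v : n → R) :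
    u ⬝ᵥ (H * (P * X * P)) *ᵥ v = (P *ᵥ u) ⬝ᵥ (H * X) *ᵥ (P *ᵥ v) := by
  rw [← dotProduct_transpose_mul_mul_mulVec, ← Matrix.mul_assoc Pᵀ, hP]
  simp only [Matrix.mul_assoc]

/-- The `H`-orthogonal projection onto the kernel of `L`. -/
noncomputable def kerProjection [DecidableEq m] [DecidableEq n] (H : Matrix n n R)
    (L : Matrix m n R) : Matrix n n R :=
  1 - H⁻¹ * Lᵀ * (L * H⁻¹ * Lᵀ)⁻¹ * L

variable [DecidableEq m] [DecidableEq n] {H : Matrix n n R} {L : Matrix m n R}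

theorem mul_kerProjection (hL : IsUnit (L * H⁻¹ * Lᵀ)) : L * kerProjection H L = 0 := by
  have hdet := (isUnit_iff_isUnit_det _).mp hL
  rw [kerProjection, Matrix.mul_sub, Matrix.mul_one, ← Matrix.mul_assoc, ← Matrix.mul_assoc,
    ← Matrix.mul_assoc, Matrix.mul_assoc (L * H⁻¹ * Lᵀ), mul_nonsing_inv_cancel_left _ _ hdet,
    sub_self]

theorem mul_kerProjection_eq (hH : IsUnit H.det) :
    H * kerProjection H L = H - Lᵀ * (L * H⁻¹ * Lᵀ)⁻¹ * L := by
  rw [kerProjection, Matrix.mul_sub, Matrix.mul_one]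
  simp only [Matrix.mul_assoc, mul_nonsing_inv_cancel_left _ _ hH]

theorem transpose_kerProjection_mul (hHT : H.IsSymm) (hH : IsUnit H.det) :
    (kerProjection H L)ᵀ * H = H * kerProjection H L := by
  calc (kerProjection H L)ᵀ * H = (H * kerProjection H L)ᵀ := by rw [transpose_mul, hHT.eq]
    _ = H * kerProjection H L := by
      simp only [mul_kerProjection_eq hH, transpose_sub, transpose_mul, transpose_transpose,
        transpose_nonsing_inv, hHT.eq, Matrix.mul_assoc]

end CommRing

end Matrix

section SBP

variable {𝕜 : Type*} [CommRing 𝕜] {N : Type*} [Fintype N]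

def sbpForm (Dx Dy H R : Matrix N N 𝕜) (u v : N → 𝕜) : 𝕜 :=
  (Dx *ᵥ u) ⬝ᵥ H *ᵥ (Dx *ᵥ v) + (Dy *ᵥ u) ⬝ᵥ H *ᵥ (Dy *ᵥ v) + u ⬝ᵥ R *ᵥ v

theorem sbpForm_self_nonneg {Dx Dy H R : Matrix N N ℝ} (hH : H.PosSemidef) (hR : R.PosSemidef)
    (u : N → ℝ) : 0 ≤ sbpForm Dx Dy H R u u := by
  have hpos {M : Matrix N N ℝ} (hM : M.PosSemidef) (x : N → ℝ) : 0 ≤ x ⬝ᵥ M *ᵥ x := by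
    simpa only [star_trivial] using hM.dotProduct_mulVec_nonneg x
  exact add_nonneg (add_nonneg (hpos hH _) (hpos hH _)) (hpos hR _)

theorem dotProduct_sbp_sub_sat_mulVec {mw me ms mn : Type*} [Fintype mw] [Fintype me]
    [Fintype ms] [Fintype mn] {H DL Dx Dy R : Matrix N N 𝕜}
    {ew dw : Matrix mw N 𝕜} {Hw : Matrix mw mw 𝕜} {ee de : Matrix me N 𝕜} {He : Matrix me me 𝕜}
    {es ds : Matrix ms N 𝕜} {Hs : Matrix ms ms 𝕜} {en dn : Matrix mn N 𝕜} {Hn : Matrix mn mn 𝕜}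
    (hSBP : ∀ u v : N → 𝕜,
      u ⬝ᵥ (H * DL) *ᵥ v =
        -((Dx *ᵥ u) ⬝ᵥ H *ᵥ (Dx *ᵥ v)) - ((Dy *ᵥ u) ⬝ᵥ H *ᵥ (Dy *ᵥ v)) - u ⬝ᵥ R *ᵥ v
        + (ew *ᵥ u) ⬝ᵥ Hw *ᵥ (dw *ᵥ v) + (ee *ᵥ u) ⬝ᵥ He *ᵥ (de *ᵥ v)
        + (es *ᵥ u) ⬝ᵥ Hs *ᵥ (ds *ᵥ v) + (en *ᵥ u) ⬝ᵥ Hn *ᵥ (dn *ᵥ v))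
    (u v : N → 𝕜) :
    u ⬝ᵥ (H * DL - ewᵀ * Hw * dw - eeᵀ * He * de - esᵀ * Hs * ds) *ᵥ v =
      -sbpForm Dx Dy H R u v + (en *ᵥ u) ⬝ᵥ Hn *ᵥ (dn *ᵥ v) := by
  simp only [sub_mulVec, dotProduct_sub, dotProduct_transpose_mul_mul_mulVec, hSBP, sbpForm]
  ring

/-- The interface SAT of block 1 cancels the flux of block 2 through the interface, and
block 1 has no flux through its constrained side. -/
theorem dotProduct_fromBlocks_interface_mulVec {n₁ n₂ m₁ m : Type*} [Fintype n₁] [Fintype n₂]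
    [Fintype m₁] [Fintype m] {A₁ : Matrix n₁ n₁ 𝕜} {A₂ : Matrix n₂ n₂ 𝕜}
    {en₁ dn₁ : Matrix m₁ n₁ 𝕜} {Hn₁ : Matrix m₁ m₁ 𝕜} {es₁ : Matrix m n₁ 𝕜}
    {en₂ dn₂ : Matrix m n₂ 𝕜} {Hs : Matrix m m 𝕜}
    {E₁ : (n₁ → 𝕜) → (n₁ → 𝕜) → 𝕜} {E₂ : (n₂ → 𝕜) → (n₂ → 𝕜) → 𝕜}
    (hA₁ : ∀ u v, u ⬝ᵥ A₁ *ᵥ v = -E₁ u v + (en₁ *ᵥ u) ⬝ᵥ Hn₁ *ᵥ (dn₁ *ᵥ v))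
    (hA₂ : ∀ u v, u ⬝ᵥ A₂ *ᵥ v = -E₂ u v + (en₂ *ᵥ u) ⬝ᵥ Hs *ᵥ (dn₂ *ᵥ v))
    {w : n₁ ⊕ n₂ → 𝕜} (hn : en₁ *ᵥ (w ∘ Sum.inl) = 0)
    (hs : es₁ *ᵥ (w ∘ Sum.inl) = en₂ *ᵥ (w ∘ Sum.inr)) (z : n₁ ⊕ n₂ → 𝕜) :
    w ⬝ᵥ fromBlocks A₁ (-(es₁ᵀ * Hs * dn₂)) 0 A₂ *ᵥ z =
      -(E₁ (w ∘ Sum.inl) (z ∘ Sum.inl) + E₂ (w ∘ Sum.inr) (z ∘ Sum.inr)) := by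
  rw [dotProduct_fromBlocks_mulVec, hA₁, hA₂, neg_mulVec, dotProduct_neg,
    dotProduct_transpose_mul_mul_mulVec, hn, hs, zero_mulVec, dotProduct_zero, zero_dotProduct]
  ring

end SBP

theorem twoBlock_D_negSemidef_general
    {Np Nm : ℕ}
    {mwp mep msp mnp mwm mem msm : ℕ}
    (Hp DLp Dxp Dyp Rp : Matrix (Fin Np) (Fin Np) ℝ)
    (Hm DLm Dxm Dym Rm : Matrix (Fin Nm) (Fin Nm) ℝ)
    (hHp : Hp.PosDef) (hHm : Hm.PosDef)
    (ewp dwp : Matrix (Fin mwp) (Fin Np) ℝ) (Hwp : Matrix (Fin mwp) (Fin mwp) ℝ)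
    (eep dep : Matrix (Fin mep) (Fin Np) ℝ) (Hep : Matrix (Fin mep) (Fin mep) ℝ)
    (esp dsp : Matrix (Fin msp) (Fin Np) ℝ) (Hsp : Matrix (Fin msp) (Fin msp) ℝ)
    (enp dnp : Matrix (Fin mnp) (Fin Np) ℝ) (Hnp : Matrix (Fin mnp) (Fin mnp) ℝ)
    (ewm dwm : Matrix (Fin mwm) (Fin Nm) ℝ) (Hwm : Matrix (Fin mwm) (Fin mwm) ℝ)
    (eem dem : Matrix (Fin mem) (Fin Nm) ℝ) (Hem : Matrix (Fin mem) (Fin mem) ℝ)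
    (esm dsm : Matrix (Fin msm) (Fin Nm) ℝ) (Hsm : Matrix (Fin msm) (Fin msm) ℝ)
    -- interface matching: m_n⁻ = m_s⁺ (same row dimension) and H_n⁻ = H_s⁺
    (enm dnm : Matrix (Fin msp) (Fin Nm) ℝ) (Hnm : Matrix (Fin msp) (Fin msp) ℝ)
    (hmatch : Hsp = Hnm)
    (hSBPp : ∀ u v : Fin Np → ℝ,
      u ⬝ᵥ (Hp * DLp) *ᵥ v =
        -((Dxp *ᵥ u) ⬝ᵥ Hp *ᵥ (Dxp *ᵥ v)) - ((Dyp *ᵥ u) ⬝ᵥ Hp *ᵥ (Dyp *ᵥ v))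
        - u ⬝ᵥ Rp *ᵥ v
        + (ewp *ᵥ u) ⬝ᵥ Hwp *ᵥ (dwp *ᵥ v) + (eep *ᵥ u) ⬝ᵥ Hep *ᵥ (dep *ᵥ v)
        + (esp *ᵥ u) ⬝ᵥ Hsp *ᵥ (dsp *ᵥ v) + (enp *ᵥ u) ⬝ᵥ Hnp *ᵥ (dnp *ᵥ v))
    (hSBPm : ∀ u v : Fin Nm → ℝ,
      u ⬝ᵥ (Hm * DLm) *ᵥ v =
        -((Dxm *ᵥ u) ⬝ᵥ Hm *ᵥ (Dxm *ᵥ v)) - ((Dym *ᵥ u) ⬝ᵥ Hm *ᵥ (Dym *ᵥ v))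
        - u ⬝ᵥ Rm *ᵥ v
        + (ewm *ᵥ u) ⬝ᵥ Hwm *ᵥ (dwm *ᵥ v) + (eem *ᵥ u) ⬝ᵥ Hem *ᵥ (dem *ᵥ v)
        + (esm *ᵥ u) ⬝ᵥ Hsm *ᵥ (dsm *ᵥ v) + (enm *ᵥ u) ⬝ᵥ Hnm *ᵥ (dnm *ᵥ v))
    (c : ℝ)
    (Hbar : Matrix (Fin Np ⊕ Fin Nm) (Fin Np ⊕ Fin Nm) ℝ)
    (hHbar : Hbar = fromBlocks Hp 0 0 Hm)
    (L : Matrix (Fin mnp ⊕ Fin msp) (Fin Np ⊕ Fin Nm) ℝ)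
    (hL : L = fromBlocks enp 0 esp (-enm))
    (hLHL : IsUnit (L * Hbar⁻¹ * Lᵀ))
    (P : Matrix (Fin Np ⊕ Fin Nm) (Fin Np ⊕ Fin Nm) ℝ)
    (hP : P = 1 - Hbar⁻¹ * Lᵀ * (L * Hbar⁻¹ * Lᵀ)⁻¹ * L)
    (SATBC1 SATIC : Matrix (Fin Np ⊕ Fin Nm) (Fin Np ⊕ Fin Nm) ℝ)
    (hSATBC1 : SATBC1 = -(Hbar⁻¹ *
      (fromBlocks (ewpᵀ * Hwp * dwp) 0 0 (ewmᵀ * Hwm * dwm)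
        + fromBlocks (eepᵀ * Hep * dep) 0 0 (eemᵀ * Hem * dem)
        + fromBlocks 0 0 0 (esmᵀ * Hsm * dsm))))
    (hSATIC : SATIC = -(Hbar⁻¹ *
      fromBlocks (espᵀ * Hsp * dsp) (espᵀ * Hsp * dnm) 0 0))
    (D : Matrix (Fin Np ⊕ Fin Nm) (Fin Np ⊕ Fin Nm) ℝ)
    (hD : D = (c ^ 2) • (P * (fromBlocks DLp 0 0 DLm + SATBC1 + SATIC) * P))
    (hRpPSD : Rp.PosSemidef) (hRmPSD : Rm.PosSemidef) :
    (∀ u v : Fin Np ⊕ Fin Nm → ℝ,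
      u ⬝ᵥ (Hbar * D) *ᵥ v =
        -(c ^ 2) *
          (((Dxp *ᵥ ((P *ᵥ u) ∘ Sum.inl)) ⬝ᵥ Hp *ᵥ (Dxp *ᵥ ((P *ᵥ v) ∘ Sum.inl))
            + (Dyp *ᵥ ((P *ᵥ u) ∘ Sum.inl)) ⬝ᵥ Hp *ᵥ (Dyp *ᵥ ((P *ᵥ v) ∘ Sum.inl))
            + ((P *ᵥ u) ∘ Sum.inl) ⬝ᵥ Rp *ᵥ ((P *ᵥ v) ∘ Sum.inl))
          + ((Dxm *ᵥ ((P *ᵥ u) ∘ Sum.inr)) ⬝ᵥ Hm *ᵥ (Dxm *ᵥ ((P *ᵥ v) ∘ Sum.inr))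
            + (Dym *ᵥ ((P *ᵥ u) ∘ Sum.inr)) ⬝ᵥ Hm *ᵥ (Dym *ᵥ ((P *ᵥ v) ∘ Sum.inr))
            + ((P *ᵥ u) ∘ Sum.inr) ⬝ᵥ Rm *ᵥ ((P *ᵥ v) ∘ Sum.inr)))) ∧
    (∀ u : Fin Np ⊕ Fin Nm → ℝ, u ⬝ᵥ Hbar *ᵥ (D *ᵥ u) ≤ 0) := by
  subst hmatch
  have hHdet : IsUnit Hbar.det := by
    rw [hHbar, det_fromBlocks_zero₂₁]
    exact (mul_pos hHp.det_pos hHm.det_pos).ne'.isUnit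
  have hHT : Hbar.IsSymm := hHbar ▸ (isHermitian_iff_isSymm.mp hHp.isHermitian).fromBlocks
    transpose_zero (isHermitian_iff_isSymm.mp hHm.isHermitian)
  have hPH : Pᵀ * Hbar = Hbar * P := hP ▸ transpose_kerProjection_mul hHT hHdet
  have hLP : L * P = 0 := hP ▸ mul_kerProjection hLHL
  have hHX : Hbar * (fromBlocks DLp 0 0 DLm + SATBC1 + SATIC) =
      fromBlocks (Hp * DLp - ewpᵀ * Hwp * dwp - eepᵀ * Hep * dep - espᵀ * Hsp * dsp)
        (-(espᵀ * Hsp * dnm)) 0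
        (Hm * DLm - ewmᵀ * Hwm * dwm - eemᵀ * Hem * dem - esmᵀ * Hsm * dsm) := by
    rw [hSATBC1, hSATIC, Matrix.mul_add, Matrix.mul_add, Matrix.mul_neg, Matrix.mul_neg,
      mul_nonsing_inv_cancel_left _ _ hHdet, mul_nonsing_inv_cancel_left _ _ hHdet, hHbar,
      fromBlocks_multiply]
    simp only [fromBlocks_add, fromBlocks_neg, Matrix.mul_zero, Matrix.zero_mul, add_zero,
      neg_zero]
    congr 1 <;> abel
  have key : ∀ u v, u ⬝ᵥ (Hbar * D) *ᵥ v = -(c ^ 2) *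
      (sbpForm Dxp Dyp Hp Rp ((P *ᵥ u) ∘ Sum.inl) ((P *ᵥ v) ∘ Sum.inl)
        + sbpForm Dxm Dym Hm Rm ((P *ᵥ u) ∘ Sum.inr) ((P *ᵥ v) ∘ Sum.inr)) := by
    intro u v
    obtain ⟨hn, hs⟩ := (fromBlocks_zero_neg_mulVec_eq_zero_iff enp esp enm (P *ᵥ u)).mp
      (by rw [← hL, mulVec_mulVec, hLP, zero_mulVec])
    rw [hD, Matrix.mul_smul, smul_mulVec, dotProduct_smul,
      dotProduct_mul_mul_mul_mulVec_of_transpose_mul_comm hPH, hHX,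
      dotProduct_fromBlocks_interface_mulVec (dotProduct_sbp_sub_sat_mulVec hSBPp)
        (dotProduct_sbp_sub_sat_mulVec hSBPm) hn hs, smul_eq_mul]
    ring
  refine ⟨key, fun u => ?_⟩
  rw [mulVec_mulVec, key]
  exact mul_nonpos_of_nonpos_of_nonneg (neg_nonpos.mpr (sq_nonneg c))
    (add_nonneg (sbpForm_self_nonneg hHp.posSemidef hRpPSD _)
      (sbpForm_self_nonneg hHm.posSemidef hRmPSD _))

/-- In the two-block SBP setting, with R⁺ and R⁻ positive semidefinite, the quadratic
form of D with respect to H̄ is a negative sum of squares; in particular −D is positive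
semidefinite with respect to H̄. -/
theorem twoBlock_D_negSemidef
    {Np Nm : ℕ} (hNp : 0 < Np) (hNm : 0 < Nm)
    {mwp mep msp mnp mwm mem msm : ℕ}
    (hmwp : 0 < mwp) (hmep : 0 < mep) (hmsp : 0 < msp) (hmnp : 0 < mnp)
    (hmwm : 0 < mwm) (hmem : 0 < mem) (hmsm : 0 < msm)
    (Hp DLp Dxp Dyp Rp : Matrix (Fin Np) (Fin Np) ℝ)
    (Hm DLm Dxm Dym Rm : Matrix (Fin Nm) (Fin Nm) ℝ)
    (hHp : Hp.PosDef) (hHm : Hm.PosDef) (hRp : Rp.IsSymm) (hRm : Rm.IsSymm)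
    (ewp dwp : Matrix (Fin mwp) (Fin Np) ℝ) (Hwp : Matrix (Fin mwp) (Fin mwp) ℝ)
    (eep dep : Matrix (Fin mep) (Fin Np) ℝ) (Hep : Matrix (Fin mep) (Fin mep) ℝ)
    (esp dsp : Matrix (Fin msp) (Fin Np) ℝ) (Hsp : Matrix (Fin msp) (Fin msp) ℝ)
    (enp dnp : Matrix (Fin mnp) (Fin Np) ℝ) (Hnp : Matrix (Fin mnp) (Fin mnp) ℝ)
    (ewm dwm : Matrix (Fin mwm) (Fin Nm) ℝ) (Hwm : Matrix (Fin mwm) (Fin mwm) ℝ)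
    (eem dem : Matrix (Fin mem) (Fin Nm) ℝ) (Hem : Matrix (Fin mem) (Fin mem) ℝ)
    (esm dsm : Matrix (Fin msm) (Fin Nm) ℝ) (Hsm : Matrix (Fin msm) (Fin msm) ℝ)
    -- interface matching: m_n⁻ = m_s⁺ (same row dimension) and H_n⁻ = H_s⁺
    (enm dnm : Matrix (Fin msp) (Fin Nm) ℝ) (Hnm : Matrix (Fin msp) (Fin msp) ℝ)
    (hHwp : Hwp.IsSymm) (hHep : Hep.IsSymm) (hHsp : Hsp.IsSymm) (hHnp : Hnp.IsSymm)
    (hHwm : Hwm.IsSymm) (hHem : Hem.IsSymm) (hHsm : Hsm.IsSymm) (hHnm : Hnm.IsSymm)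
    (hmatch : Hsp = Hnm)
    (hSBPp : ∀ u v : Fin Np → ℝ,
      u ⬝ᵥ (Hp * DLp) *ᵥ v =
        -((Dxp *ᵥ u) ⬝ᵥ Hp *ᵥ (Dxp *ᵥ v)) - ((Dyp *ᵥ u) ⬝ᵥ Hp *ᵥ (Dyp *ᵥ v))
        - u ⬝ᵥ Rp *ᵥ v
        + (ewp *ᵥ u) ⬝ᵥ Hwp *ᵥ (dwp *ᵥ v) + (eep *ᵥ u) ⬝ᵥ Hep *ᵥ (dep *ᵥ v)
        + (esp *ᵥ u) ⬝ᵥ Hsp *ᵥ (dsp *ᵥ v) + (enp *ᵥ u) ⬝ᵥ Hnp *ᵥ (dnp *ᵥ v))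
    (hSBPm : ∀ u v : Fin Nm → ℝ,
      u ⬝ᵥ (Hm * DLm) *ᵥ v =
        -((Dxm *ᵥ u) ⬝ᵥ Hm *ᵥ (Dxm *ᵥ v)) - ((Dym *ᵥ u) ⬝ᵥ Hm *ᵥ (Dym *ᵥ v))
        - u ⬝ᵥ Rm *ᵥ v
        + (ewm *ᵥ u) ⬝ᵥ Hwm *ᵥ (dwm *ᵥ v) + (eem *ᵥ u) ⬝ᵥ Hem *ᵥ (dem *ᵥ v)
        + (esm *ᵥ u) ⬝ᵥ Hsm *ᵥ (dsm *ᵥ v) + (enm *ᵥ u) ⬝ᵥ Hnm *ᵥ (dnm *ᵥ v))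
    (c : ℝ)
    (Hbar : Matrix (Fin Np ⊕ Fin Nm) (Fin Np ⊕ Fin Nm) ℝ)
    (hHbar : Hbar = fromBlocks Hp 0 0 Hm)
    (L : Matrix (Fin mnp ⊕ Fin msp) (Fin Np ⊕ Fin Nm) ℝ)
    (hL : L = fromBlocks enp 0 esp (-enm))
    (hLHL : IsUnit (L * Hbar⁻¹ * Lᵀ))
    (P : Matrix (Fin Np ⊕ Fin Nm) (Fin Np ⊕ Fin Nm) ℝ)
    (hP : P = 1 - Hbar⁻¹ * Lᵀ * (L * Hbar⁻¹ * Lᵀ)⁻¹ * L)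
    (SATBC1 SATBC2 SATIC : Matrix (Fin Np ⊕ Fin Nm) (Fin Np ⊕ Fin Nm) ℝ)
    (hSATBC1 : SATBC1 = -(Hbar⁻¹ *
      (fromBlocks (ewpᵀ * Hwp * dwp) 0 0 (ewmᵀ * Hwm * dwm)
        + fromBlocks (eepᵀ * Hep * dep) 0 0 (eemᵀ * Hem * dem)
        + fromBlocks 0 0 0 (esmᵀ * Hsm * dsm))))
    (hSATIC : SATIC = -(Hbar⁻¹ *
      fromBlocks (espᵀ * Hsp * dsp) (espᵀ * Hsp * dnm) 0 0))
    (hSATBC2 : SATBC2 = -(Hbar⁻¹ *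
      (fromBlocks (ewpᵀ * Hwp * ewp) 0 0 (ewmᵀ * Hwm * ewm)
        + fromBlocks (eepᵀ * Hep * eep) 0 0 (eemᵀ * Hem * eem))))
    (D E : Matrix (Fin Np ⊕ Fin Nm) (Fin Np ⊕ Fin Nm) ℝ)
    (hD : D = (c ^ 2) • (P * (fromBlocks DLp 0 0 DLm + SATBC1 + SATIC) * P))
    (hE : E = c • (P * SATBC2 * P))
    (hRpPSD : Rp.PosSemidef) (hRmPSD : Rm.PosSemidef) :
    (∀ u v : Fin Np ⊕ Fin Nm → ℝ,
      u ⬝ᵥ (Hbar * D) *ᵥ v =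
        -(c ^ 2) *
          (((Dxp *ᵥ ((P *ᵥ u) ∘ Sum.inl)) ⬝ᵥ Hp *ᵥ (Dxp *ᵥ ((P *ᵥ v) ∘ Sum.inl))
            + (Dyp *ᵥ ((P *ᵥ u) ∘ Sum.inl)) ⬝ᵥ Hp *ᵥ (Dyp *ᵥ ((P *ᵥ v) ∘ Sum.inl))
            + ((P *ᵥ u) ∘ Sum.inl) ⬝ᵥ Rp *ᵥ ((P *ᵥ v) ∘ Sum.inl))
          + ((Dxm *ᵥ ((P *ᵥ u) ∘ Sum.inr)) ⬝ᵥ Hm *ᵥ (Dxm *ᵥ ((P *ᵥ v) ∘ Sum.inr))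
            + (Dym *ᵥ ((P *ᵥ u) ∘ Sum.inr)) ⬝ᵥ Hm *ᵥ (Dym *ᵥ ((P *ᵥ v) ∘ Sum.inr))
            + ((P *ᵥ u) ∘ Sum.inr) ⬝ᵥ Rm *ᵥ ((P *ᵥ v) ∘ Sum.inr)))) ∧
    (∀ u : Fin Np ⊕ Fin Nm → ℝ, u ⬝ᵥ Hbar *ᵥ (D *ᵥ u) ≤ 0) :=
  twoBlock_D_negSemidef_general Hp DLp Dxp Dyp Rp Hm DLm Dxm Dym Rm hHp hHm ewp dwp Hwp eep dep Hep
    esp dsp Hsp enp dnp Hnp ewm dwm Hwm eem dem Hem esm dsm Hsm enm dnm Hnm hmatch hSBPp hSBPm c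
    Hbar hHbar L hL hLHL P hP SATBC1 SATIC hSATBC1 hSATIC D hD hRpPSD hRmPSD
end

section
/- Stability of the SBP-P-SAT scheme: in the two-block SBP setting, let w : ℝ → ℝ^N be twice continuously differentiable with w''(t) = D w(t) + E w'(t) for all t, and define the discrete energy 𝔈(t) = w'(t)ᵀ H̄ w'(t) + c² Σ_{σ∈{+,−}} [ (D_x^σ ṽ^σ(t))ᵀ H^σ (D_x^σ ṽ^σ(t)) + (D_y^σ ṽ^σ(t))ᵀ H^σ (D_y^σ ṽ^σ(t)) + ṽ^σ(t)ᵀ R^σ ṽ^σ(t) ], where ṽ(t) = P w(t) and ṽ^σ denotes its block σ. Then 𝔈'(t) = −2c Σ_{σ∈{+,−}} Σ_{k∈{w,e}} (e_k^σ (P w'(t))^σ)ᵀ H_k^σ (e_k^σ (P w'(t))^σ) for all t; in particular, if c ≥ 0, R⁺ and R⁻ are positive semidefinite, and H_k⁺, H_k⁻ are positive semidefinite for k ∈ {w,e}, then 𝔈 is nonnegative and nonincreasing. -/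
/-!
`P` is the projection onto `ker L` that is self-adjoint for `⟨u, v⟩ = uᵀ H̄ v`, so `H̄ P = Pᵀ H̄`
and `L P = 0`. Writing the SBP identity as `H D_L = -K + Σₖ e_kᵀ H_k d_k` with the stiffness
`K = D_xᵀ H D_x + D_yᵀ H D_y + R`, the SATs cancel every boundary term of
`H̄ (D_L + SAT_BC1 + SAT_IC)` except one of the form `Lᵀ M`, which the projection annihilates.
Hence `H̄ D = -S` with `S = c² Pᵀ K̄ P`, `K̄ = blockdiag(K⁺, K⁻)`, and the energy is
`w'ᵀ H̄ w' + wᵀ S w`. For any system `w'' = D w + E w'` with `H̄ D = -S` this energy has derivative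
`2 w'ᵀ H̄ E w'`, and here `H̄ E = -c Pᵀ B P` with `B` collecting the west and east boundary terms.
-/

open Matrix

namespace Matrix

variable {m n k 𝕜 : Type*}

theorem dotProduct_transpose_mul_mul_mulVec_s6 [Fintype m] [Fintype n] [Fintype k] [CommSemiring 𝕜]
    (e : Matrix m n 𝕜) (H : Matrix m m 𝕜) (d : Matrix m k 𝕜) (u : n → 𝕜) (v : k → 𝕜) :
    u ⬝ᵥ (eᵀ * H * d) *ᵥ v = (e *ᵥ u) ⬝ᵥ H *ᵥ (d *ᵥ v) := by
  rw [← mulVec_mulVec, ← mulVec_mulVec, dotProduct_mulVec, vecMul_transpose]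

theorem IsSymm.dotProduct_mulVec_comm [Fintype n] [CommSemiring 𝕜] {A : Matrix n n 𝕜}
    (hA : A.IsSymm) (u v : n → 𝕜) : u ⬝ᵥ A *ᵥ v = v ⬝ᵥ A *ᵥ u := by
  rw [dotProduct_mulVec, ← mulVec_transpose, hA.eq, dotProduct_comm]

theorem IsSymm.transpose_mul_mul [Fintype m] [CommSemiring 𝕜] {A : Matrix m m 𝕜}
    (hA : A.IsSymm) (B : Matrix m n 𝕜) : (Bᵀ * A * B).IsSymm := by
  simp only [IsSymm, transpose_mul, transpose_transpose, hA.eq, Matrix.mul_assoc]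

theorem ext_of_dotProduct_mulVec [Fintype m] [Fintype n] [DecidableEq m] [DecidableEq n]
    [CommSemiring 𝕜] {A B : Matrix m n 𝕜} (h : ∀ u v, u ⬝ᵥ A *ᵥ v = u ⬝ᵥ B *ᵥ v) : A = B := by
  ext i j
  simpa [single_dotProduct, mulVec_single_one] using h (Pi.single i 1) (Pi.single j 1)

theorem dotProduct_fromBlocks_zero_mulVec [Fintype m] [Fintype n] [Semiring 𝕜]
    (A : Matrix m m 𝕜) (D : Matrix n n 𝕜) (u v : m ⊕ n → 𝕜) :
    u ⬝ᵥ fromBlocks A 0 0 D *ᵥ v =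
      (u ∘ Sum.inl) ⬝ᵥ A *ᵥ (v ∘ Sum.inl) + (u ∘ Sum.inr) ⬝ᵥ D *ᵥ (v ∘ Sum.inr) := by
  simp [fromBlocks_mulVec, dotProduct, Fintype.sum_sum_type]

theorem PosSemidef.fromBlocks_zero [Fintype m] [Fintype n] [CommRing 𝕜] [PartialOrder 𝕜]
    [StarRing 𝕜] [AddLeftMono 𝕜] {A : Matrix m m 𝕜} {D : Matrix n n 𝕜} (hA : A.PosSemidef)
    (hD : D.PosSemidef) : (fromBlocks A 0 0 D).PosSemidef := by
  refine .of_dotProduct_mulVec_nonneg (hA.isHermitian.fromBlocks (by simp) hD.isHermitian)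
    fun x => ?_
  rw [dotProduct_fromBlocks_zero_mulVec]
  exact add_nonneg (hA.dotProduct_mulVec_nonneg _) (hD.dotProduct_mulVec_nonneg _)

theorem PosSemidef.transpose_mul_mul_same [Fintype m] [Fintype n] [CommRing 𝕜] [PartialOrder 𝕜]
    [StarRing 𝕜] [TrivialStar 𝕜] {A : Matrix m m 𝕜} (hA : A.PosSemidef) (B : Matrix m n 𝕜) :
    (Bᵀ * A * B).PosSemidef := by
  simpa [conjTranspose_eq_transpose_of_trivial] using hA.conjTranspose_mul_mul_same B

theorem PosSemidef.dotProduct_mulVec_self_nonneg [Fintype n] {M : Matrix n n ℝ}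
    (hM : M.PosSemidef) (x : n → ℝ) : 0 ≤ x ⬝ᵥ M *ᵥ x := by
  simpa using hM.dotProduct_mulVec_nonneg x

variable [Fintype n] [Fintype m] [CommRing 𝕜] {H : Matrix n n 𝕜}

theorem mul_sandwich_of_mul_eq_transpose_mul {P : Matrix n n 𝕜} (hHP : H * P = Pᵀ * H)
    (A : Matrix n n 𝕜) : H * (P * A * P) = Pᵀ * (H * A) * P := by
  rw [← Matrix.mul_assoc, ← Matrix.mul_assoc, hHP, Matrix.mul_assoc Pᵀ H A]

theorem mul_sandwich_eq_of_mul_eq_add {P A G : Matrix n n 𝕜} {L : Matrix m n 𝕜}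
    {M : Matrix m n 𝕜} (hHP : H * P = Pᵀ * H) (hLP : L * P = 0) (hA : H * A = G + Lᵀ * M) :
    H * (P * A * P) = Pᵀ * G * P := by
  rw [mul_sandwich_of_mul_eq_transpose_mul hHP, hA, Matrix.mul_add, Matrix.add_mul,
    ← Matrix.mul_assoc Pᵀ Lᵀ, ← transpose_mul, hLP, transpose_zero, Matrix.zero_mul,
    Matrix.zero_mul, add_zero]

variable [DecidableEq n] [DecidableEq m]

noncomputable def orthogonalProjKer (H : Matrix n n 𝕜) (L : Matrix m n 𝕜) : Matrix n n 𝕜 :=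
  1 - H⁻¹ * Lᵀ * (L * H⁻¹ * Lᵀ)⁻¹ * L

variable {L : Matrix m n 𝕜}

theorem mul_orthogonalProjKer (hL : IsUnit (L * H⁻¹ * Lᵀ)) : L * orthogonalProjKer H L = 0 := by
  rw [orthogonalProjKer, Matrix.mul_sub, Matrix.mul_one]
  simp only [← Matrix.mul_assoc]
  rw [mul_nonsing_inv _ ((isUnit_iff_isUnit_det _).1 hL), Matrix.one_mul, sub_self]

theorem mul_orthogonalProjKer_eq_transpose_mul (hH : H.IsSymm) (hdet : IsUnit H.det) :
    H * orthogonalProjKer H L = (orthogonalProjKer H L)ᵀ * H := by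
  have hHinv : H⁻¹ᵀ = H⁻¹ := by rw [transpose_nonsing_inv, hH.eq]
  have hS : (L * H⁻¹ * Lᵀ)⁻¹ᵀ = (L * H⁻¹ * Lᵀ)⁻¹ := by
    rw [transpose_nonsing_inv, transpose_mul, transpose_mul, transpose_transpose, hHinv,
      Matrix.mul_assoc]
  simp only [orthogonalProjKer, Matrix.mul_sub, Matrix.sub_mul, transpose_sub, transpose_one,
    Matrix.mul_one, Matrix.one_mul, transpose_mul, transpose_transpose, hS, hHinv]
  simp only [← Matrix.mul_assoc, mul_nonsing_inv _ hdet, Matrix.one_mul]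
  simp only [Matrix.mul_assoc, nonsing_inv_mul _ hdet, Matrix.mul_one]

end Matrix

section Calculus

variable {n κ : Type*} [Fintype n] [Fintype κ] {f g : ℝ → n → ℝ} {f' g' : n → ℝ} {t : ℝ}

theorem HasDerivAt.mulVec (A : Matrix κ n ℝ) (hf : HasDerivAt f f' t) :
    HasDerivAt (fun s => A *ᵥ f s) (A *ᵥ f') t :=
  A.mulVecLin.toContinuousLinearMap.hasFDerivAt.comp_hasDerivAt t hf

theorem HasDerivAt.dotProduct (hf : HasDerivAt f f' t) (hg : HasDerivAt g g' t) :
    HasDerivAt (fun s => f s ⬝ᵥ g s) (f' ⬝ᵥ g t + f t ⬝ᵥ g') t := by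
  have h := HasDerivAt.fun_sum fun i (_ : i ∈ Finset.univ) =>
    (hasDerivAt_pi.1 hf i).fun_mul (hasDerivAt_pi.1 hg i)
  simpa [_root_.dotProduct, Finset.sum_add_distrib] using h

theorem HasDerivAt.dotProduct_mulVec_self {A : Matrix n n ℝ} (hA : A.IsSymm)
    (hf : HasDerivAt f f' t) :
    HasDerivAt (fun s => f s ⬝ᵥ A *ᵥ f s) (2 * (f' ⬝ᵥ A *ᵥ f t)) t := by
  convert hf.dotProduct (hf.mulVec A) using 1
  rw [hA.dotProduct_mulVec_comm (f t)]
  ring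

end Calculus

section SecondOrderEnergy

variable {n : Type*} [Fintype n] {H S D E : Matrix n n ℝ} {w w' : ℝ → n → ℝ}

def secondOrderEnergy (H S : Matrix n n ℝ) (w w' : ℝ → n → ℝ) (t : ℝ) : ℝ :=
  w' t ⬝ᵥ H *ᵥ w' t + w t ⬝ᵥ S *ᵥ w t

theorem hasDerivAt_secondOrderEnergy {t : ℝ} (hH : H.IsSymm) (hS : S.IsSymm)
    (hHD : H * D = -S) (hw : HasDerivAt w (w' t) t)
    (hw' : HasDerivAt w' (D *ᵥ w t + E *ᵥ w' t) t) :
    HasDerivAt (secondOrderEnergy H S w w') (2 * (w' t ⬝ᵥ (H * E) *ᵥ w' t)) t := by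
  refine ((hw'.dotProduct_mulVec_self hH).add (hw.dotProduct_mulVec_self hS)).congr_deriv ?_
  rw [hH.dotProduct_mulVec_comm, mulVec_add, mulVec_mulVec, mulVec_mulVec, hHD]
  simp only [dotProduct_add, neg_mulVec, dotProduct_neg]
  ring

theorem secondOrderEnergy_nonneg (hH : H.PosSemidef) (hS : S.PosSemidef) (t : ℝ) :
    0 ≤ secondOrderEnergy H S w w' t :=
  add_nonneg (hH.dotProduct_mulVec_self_nonneg _) (hS.dotProduct_mulVec_self_nonneg _)

theorem antitone_secondOrderEnergy (hH : H.IsSymm) (hS : S.IsSymm) (hHD : H * D = -S)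
    (hw : ∀ t, HasDerivAt w (w' t) t) (hw' : ∀ t, HasDerivAt w' (D *ᵥ w t + E *ᵥ w' t) t)
    (hHE : ∀ v, v ⬝ᵥ (H * E) *ᵥ v ≤ 0) : Antitone (secondOrderEnergy H S w w') := by
  have h t := hasDerivAt_secondOrderEnergy hH hS hHD (hw t) (hw' t)
  refine antitone_of_deriv_nonpos (fun t => (h t).differentiableAt) fun t => ?_
  rw [(h t).deriv]
  linarith [hHE (w' t)]

end SecondOrderEnergy

section SBP

variable {N mw me ms mn : Type*} [Fintype N] [Fintype mw] [Fintype me] [Fintype ms] [Fintype mn]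

def sbpStiffness (H Dx Dy R : Matrix N N ℝ) : Matrix N N ℝ :=
  Dxᵀ * H * Dx + Dyᵀ * H * Dy + R

variable {H Dx Dy R : Matrix N N ℝ}

theorem dotProduct_sbpStiffness_mulVec (u v : N → ℝ) :
    u ⬝ᵥ sbpStiffness H Dx Dy R *ᵥ v =
      (Dx *ᵥ u) ⬝ᵥ H *ᵥ (Dx *ᵥ v) + (Dy *ᵥ u) ⬝ᵥ H *ᵥ (Dy *ᵥ v) + u ⬝ᵥ R *ᵥ v := by
  simp only [sbpStiffness, add_mulVec, dotProduct_add, dotProduct_transpose_mul_mul_mulVec_s6]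

theorem sbpStiffness_isSymm (hH : H.IsSymm) (hR : R.IsSymm) :
    (sbpStiffness H Dx Dy R).IsSymm :=
  ((hH.transpose_mul_mul Dx).add (hH.transpose_mul_mul Dy)).add hR

theorem sbpStiffness_posSemidef (hH : H.PosSemidef) (hR : R.PosSemidef) :
    (sbpStiffness H Dx Dy R).PosSemidef := by
  simpa [sbpStiffness, conjTranspose_eq_transpose_of_trivial] using
    ((hH.conjTranspose_mul_mul_same Dx).add (hH.conjTranspose_mul_mul_same Dy)).add hR

theorem mul_eq_of_sbp [DecidableEq N] {DL : Matrix N N ℝ}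
    {ew dw : Matrix mw N ℝ} {Hw : Matrix mw mw ℝ} {ee de : Matrix me N ℝ} {He : Matrix me me ℝ}
    {es ds : Matrix ms N ℝ} {Hs : Matrix ms ms ℝ} {en dn : Matrix mn N ℝ} {Hn : Matrix mn mn ℝ}
    (hSBP : ∀ u v : N → ℝ,
      u ⬝ᵥ (H * DL) *ᵥ v =
        -((Dx *ᵥ u) ⬝ᵥ H *ᵥ (Dx *ᵥ v)) - ((Dy *ᵥ u) ⬝ᵥ H *ᵥ (Dy *ᵥ v)) - u ⬝ᵥ R *ᵥ v
        + (ew *ᵥ u) ⬝ᵥ Hw *ᵥ (dw *ᵥ v) + (ee *ᵥ u) ⬝ᵥ He *ᵥ (de *ᵥ v)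
        + (es *ᵥ u) ⬝ᵥ Hs *ᵥ (ds *ᵥ v) + (en *ᵥ u) ⬝ᵥ Hn *ᵥ (dn *ᵥ v)) :
    H * DL = -sbpStiffness H Dx Dy R + ewᵀ * Hw * dw + eeᵀ * He * de + esᵀ * Hs * ds
      + enᵀ * Hn * dn := by
  refine ext_of_dotProduct_mulVec fun u v => ?_
  simp only [hSBP, add_mulVec, neg_mulVec, dotProduct_add, dotProduct_neg,
    dotProduct_sbpStiffness_mulVec, dotProduct_transpose_mul_mul_mulVec_s6]
  ring

theorem sbp_sat_eq_neg_stiffness_add_constraint {p q a b : Type*} [Fintype p] [Fintype q]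
    [Fintype a] [Fintype b] {Hp DLp Kp Xp Yp : Matrix p p ℝ} {Hm DLm Km Xm Ym Zm : Matrix q q ℝ}
    {esp dsp : Matrix b p ℝ} {enp dnp : Matrix a p ℝ} {enm dnm : Matrix b q ℝ}
    {Hn : Matrix a a ℝ} {Hs : Matrix b b ℝ}
    (hp : Hp * DLp = -Kp + Xp + Yp + espᵀ * Hs * dsp + enpᵀ * Hn * dnp)
    (hm : Hm * DLm = -Km + Xm + Ym + Zm + enmᵀ * Hs * dnm) :
    fromBlocks Hp 0 0 Hm * fromBlocks DLp 0 0 DLm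
        - (fromBlocks Xp 0 0 Xm + fromBlocks Yp 0 0 Ym + fromBlocks 0 0 0 Zm)
        - fromBlocks (espᵀ * Hs * dsp) (espᵀ * Hs * dnm) 0 0 =
      -fromBlocks Kp 0 0 Km
        + (fromBlocks enp 0 esp (-enm))ᵀ * fromBlocks (Hn * dnp) 0 0 (-(Hs * dnm)) := by
  simp only [fromBlocks_multiply, fromBlocks_transpose, sub_eq_add_neg, fromBlocks_add,
    fromBlocks_neg, hp, hm, Matrix.mul_zero, Matrix.zero_mul, Matrix.mul_neg, Matrix.neg_mul,
    transpose_zero, transpose_neg, add_zero, zero_add, Matrix.mul_assoc]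
  congr 1 <;> abel

end SBP

theorem twoBlock_energy_stability_general
    {Np Nm : ℕ}
    {mwp mep msp mnp mwm mem msm : ℕ}
    (Hp DLp Dxp Dyp Rp : Matrix (Fin Np) (Fin Np) ℝ)
    (Hm DLm Dxm Dym Rm : Matrix (Fin Nm) (Fin Nm) ℝ)
    (hHp : Hp.PosDef) (hHm : Hm.PosDef) (hRp : Rp.IsSymm) (hRm : Rm.IsSymm)
    (ewp dwp : Matrix (Fin mwp) (Fin Np) ℝ) (Hwp : Matrix (Fin mwp) (Fin mwp) ℝ)
    (eep dep : Matrix (Fin mep) (Fin Np) ℝ) (Hep : Matrix (Fin mep) (Fin mep) ℝ)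
    (esp dsp : Matrix (Fin msp) (Fin Np) ℝ) (Hsp : Matrix (Fin msp) (Fin msp) ℝ)
    (enp dnp : Matrix (Fin mnp) (Fin Np) ℝ) (Hnp : Matrix (Fin mnp) (Fin mnp) ℝ)
    (ewm dwm : Matrix (Fin mwm) (Fin Nm) ℝ) (Hwm : Matrix (Fin mwm) (Fin mwm) ℝ)
    (eem dem : Matrix (Fin mem) (Fin Nm) ℝ) (Hem : Matrix (Fin mem) (Fin mem) ℝ)
    (esm dsm : Matrix (Fin msm) (Fin Nm) ℝ) (Hsm : Matrix (Fin msm) (Fin msm) ℝ)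
    -- interface matching: m_n⁻ = m_s⁺ (same row dimension) and H_n⁻ = H_s⁺
    (enm dnm : Matrix (Fin msp) (Fin Nm) ℝ) (Hnm : Matrix (Fin msp) (Fin msp) ℝ)
    (hmatch : Hsp = Hnm)
    (hSBPp : ∀ u v : Fin Np → ℝ,
      u ⬝ᵥ (Hp * DLp) *ᵥ v =
        -((Dxp *ᵥ u) ⬝ᵥ Hp *ᵥ (Dxp *ᵥ v)) - ((Dyp *ᵥ u) ⬝ᵥ Hp *ᵥ (Dyp *ᵥ v))
        - u ⬝ᵥ Rp *ᵥ v
        + (ewp *ᵥ u) ⬝ᵥ Hwp *ᵥ (dwp *ᵥ v) + (eep *ᵥ u) ⬝ᵥ Hep *ᵥ (dep *ᵥ v)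
        + (esp *ᵥ u) ⬝ᵥ Hsp *ᵥ (dsp *ᵥ v) + (enp *ᵥ u) ⬝ᵥ Hnp *ᵥ (dnp *ᵥ v))
    (hSBPm : ∀ u v : Fin Nm → ℝ,
      u ⬝ᵥ (Hm * DLm) *ᵥ v =
        -((Dxm *ᵥ u) ⬝ᵥ Hm *ᵥ (Dxm *ᵥ v)) - ((Dym *ᵥ u) ⬝ᵥ Hm *ᵥ (Dym *ᵥ v))
        - u ⬝ᵥ Rm *ᵥ v
        + (ewm *ᵥ u) ⬝ᵥ Hwm *ᵥ (dwm *ᵥ v) + (eem *ᵥ u) ⬝ᵥ Hem *ᵥ (dem *ᵥ v)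
        + (esm *ᵥ u) ⬝ᵥ Hsm *ᵥ (dsm *ᵥ v) + (enm *ᵥ u) ⬝ᵥ Hnm *ᵥ (dnm *ᵥ v))
    (c : ℝ)
    (Hbar : Matrix (Fin Np ⊕ Fin Nm) (Fin Np ⊕ Fin Nm) ℝ)
    (hHbar : Hbar = fromBlocks Hp 0 0 Hm)
    (L : Matrix (Fin mnp ⊕ Fin msp) (Fin Np ⊕ Fin Nm) ℝ)
    (hL : L = fromBlocks enp 0 esp (-enm))
    (hLHL : IsUnit (L * Hbar⁻¹ * Lᵀ))
    (P : Matrix (Fin Np ⊕ Fin Nm) (Fin Np ⊕ Fin Nm) ℝ)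
    (hP : P = 1 - Hbar⁻¹ * Lᵀ * (L * Hbar⁻¹ * Lᵀ)⁻¹ * L)
    (SATBC1 SATBC2 SATIC : Matrix (Fin Np ⊕ Fin Nm) (Fin Np ⊕ Fin Nm) ℝ)
    (hSATBC1 : SATBC1 = -(Hbar⁻¹ *
      (fromBlocks (ewpᵀ * Hwp * dwp) 0 0 (ewmᵀ * Hwm * dwm)
        + fromBlocks (eepᵀ * Hep * dep) 0 0 (eemᵀ * Hem * dem)
        + fromBlocks 0 0 0 (esmᵀ * Hsm * dsm))))
    (hSATIC : SATIC = -(Hbar⁻¹ *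
      fromBlocks (espᵀ * Hsp * dsp) (espᵀ * Hsp * dnm) 0 0))
    (hSATBC2 : SATBC2 = -(Hbar⁻¹ *
      (fromBlocks (ewpᵀ * Hwp * ewp) 0 0 (ewmᵀ * Hwm * ewm)
        + fromBlocks (eepᵀ * Hep * eep) 0 0 (eemᵀ * Hem * eem))))
    (D E : Matrix (Fin Np ⊕ Fin Nm) (Fin Np ⊕ Fin Nm) ℝ)
    (hD : D = (c ^ 2) • (P * (fromBlocks DLp 0 0 DLm + SATBC1 + SATIC) * P))
    (hE : E = c • (P * SATBC2 * P))
    (w : ℝ → Fin Np ⊕ Fin Nm → ℝ) (hw : ContDiff ℝ 2 w)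
    (hode : ∀ t : ℝ, deriv (deriv w) t = D *ᵥ w t + E *ᵥ deriv w t)
    (En : ℝ → ℝ)
    (hEn : En = fun t =>
      (deriv w t) ⬝ᵥ Hbar *ᵥ (deriv w t)
      + c ^ 2 *
        (((Dxp *ᵥ ((P *ᵥ w t) ∘ Sum.inl)) ⬝ᵥ Hp *ᵥ (Dxp *ᵥ ((P *ᵥ w t) ∘ Sum.inl))
          + (Dyp *ᵥ ((P *ᵥ w t) ∘ Sum.inl)) ⬝ᵥ Hp *ᵥ (Dyp *ᵥ ((P *ᵥ w t) ∘ Sum.inl))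
          + ((P *ᵥ w t) ∘ Sum.inl) ⬝ᵥ Rp *ᵥ ((P *ᵥ w t) ∘ Sum.inl))
        + ((Dxm *ᵥ ((P *ᵥ w t) ∘ Sum.inr)) ⬝ᵥ Hm *ᵥ (Dxm *ᵥ ((P *ᵥ w t) ∘ Sum.inr))
          + (Dym *ᵥ ((P *ᵥ w t) ∘ Sum.inr)) ⬝ᵥ Hm *ᵥ (Dym *ᵥ ((P *ᵥ w t) ∘ Sum.inr))
          + ((P *ᵥ w t) ∘ Sum.inr) ⬝ᵥ Rm *ᵥ ((P *ᵥ w t) ∘ Sum.inr)))) :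
    (∀ t : ℝ,
      deriv En t =
        -(2 * c) *
          ((ewp *ᵥ ((P *ᵥ deriv w t) ∘ Sum.inl)) ⬝ᵥ Hwp *ᵥ (ewp *ᵥ ((P *ᵥ deriv w t) ∘ Sum.inl))
          + (eep *ᵥ ((P *ᵥ deriv w t) ∘ Sum.inl)) ⬝ᵥ Hep *ᵥ (eep *ᵥ ((P *ᵥ deriv w t) ∘ Sum.inl))
          + (ewm *ᵥ ((P *ᵥ deriv w t) ∘ Sum.inr)) ⬝ᵥ Hwm *ᵥ (ewm *ᵥ ((P *ᵥ deriv w t) ∘ Sum.inr))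
          + (eem *ᵥ ((P *ᵥ deriv w t) ∘ Sum.inr)) ⬝ᵥ Hem *ᵥ (eem *ᵥ ((P *ᵥ deriv w t) ∘ Sum.inr)))) ∧
    (0 ≤ c → Rp.PosSemidef → Rm.PosSemidef →
      Hwp.PosSemidef → Hep.PosSemidef → Hwm.PosSemidef → Hem.PosSemidef →
      (∀ t : ℝ, 0 ≤ En t) ∧ Antitone En) := by
  subst hmatch
  set Kbar := fromBlocks (sbpStiffness Hp Dxp Dyp Rp) 0 0 (sbpStiffness Hm Dxm Dym Rm)
  set Bbar := fromBlocks (ewpᵀ * Hwp * ewp) 0 0 (ewmᵀ * Hwm * ewm)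
    + fromBlocks (eepᵀ * Hep * eep) 0 0 (eemᵀ * Hem * eem)
  have hHp_symm : Hp.IsSymm := isHermitian_iff_isSymm.1 hHp.isHermitian
  have hHm_symm : Hm.IsSymm := isHermitian_iff_isSymm.1 hHm.isHermitian
  have hHbar_symm : Hbar.IsSymm := hHbar ▸ hHp_symm.fromBlocks transpose_zero hHm_symm
  have hdet : IsUnit Hbar.det := by
    rw [hHbar, det_fromBlocks_zero₂₁]
    exact ((isUnit_iff_isUnit_det _).1 hHp.isUnit).mul ((isUnit_iff_isUnit_det _).1 hHm.isUnit)
  have hHP : Hbar * P = Pᵀ * Hbar := hP ▸ mul_orthogonalProjKer_eq_transpose_mul hHbar_symm hdet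
  have hHD : Hbar * D = -(c ^ 2 • (Pᵀ * Kbar * P)) := by
    have hHA : Hbar * (fromBlocks DLp 0 0 DLm + SATBC1 + SATIC) =
        -Kbar + Lᵀ * fromBlocks (Hnp * dnp) 0 0 (-(Hsp * dnm)) := by
      rw [Matrix.mul_add, Matrix.mul_add, hSATBC1, hSATIC, Matrix.mul_neg, Matrix.mul_neg,
        mul_nonsing_inv_cancel_left _ _ hdet, mul_nonsing_inv_cancel_left _ _ hdet,
        ← sub_eq_add_neg, ← sub_eq_add_neg, hHbar, hL]
      exact sbp_sat_eq_neg_stiffness_add_constraint (mul_eq_of_sbp hSBPp) (mul_eq_of_sbp hSBPm)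
    rw [hD, Matrix.mul_smul, mul_sandwich_eq_of_mul_eq_add hHP (hP ▸ mul_orthogonalProjKer hLHL)
      hHA, Matrix.mul_neg, Matrix.neg_mul, smul_neg]
  have hHE (v) : v ⬝ᵥ (Hbar * E) *ᵥ v = -c * ((P *ᵥ v) ⬝ᵥ Bbar *ᵥ (P *ᵥ v)) := by
    rw [hE, Matrix.mul_smul, mul_sandwich_of_mul_eq_transpose_mul hHP, hSATBC2, Matrix.mul_neg,
      mul_nonsing_inv_cancel_left _ _ hdet, Matrix.mul_neg, Matrix.neg_mul, smul_neg, neg_mulVec,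
      smul_mulVec, dotProduct_neg, dotProduct_smul, smul_eq_mul,
      dotProduct_transpose_mul_mul_mulVec_s6, neg_mul]
  have hEn' : En = secondOrderEnergy Hbar (c ^ 2 • (Pᵀ * Kbar * P)) w (deriv w) := by
    rw [hEn]
    funext t
    rw [secondOrderEnergy, smul_mulVec, dotProduct_smul, smul_eq_mul,
      dotProduct_transpose_mul_mul_mulVec_s6, dotProduct_fromBlocks_zero_mulVec,
      dotProduct_sbpStiffness_mulVec, dotProduct_sbpStiffness_mulVec]
  have hS_symm : (c ^ 2 • (Pᵀ * Kbar * P)).IsSymm :=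
    (((sbpStiffness_isSymm hHp_symm hRp).fromBlocks transpose_zero
      (sbpStiffness_isSymm hHm_symm hRm)).transpose_mul_mul P).smul _
  have hw1 t : HasDerivAt w (deriv w t) t := (hw.differentiable two_ne_zero t).hasDerivAt
  have hw2 t : HasDerivAt (deriv w) (D *ᵥ w t + E *ᵥ deriv w t) t :=
    hode t ▸ (hw.differentiable_deriv_two t).hasDerivAt
  refine ⟨fun t => ?_, fun hc hRp_psd hRm_psd hHwp_psd hHep_psd hHwm_psd hHem_psd => ⟨?_, ?_⟩⟩
  · rw [hEn', (hasDerivAt_secondOrderEnergy hHbar_symm hS_symm hHD (hw1 t) (hw2 t)).deriv, hHE]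
    simp only [Bbar, add_mulVec, dotProduct_add, dotProduct_fromBlocks_zero_mulVec,
      dotProduct_transpose_mul_mul_mulVec_s6]
    ring
  · have hK_psd : Kbar.PosSemidef :=
      (sbpStiffness_posSemidef hHp.posSemidef hRp_psd).fromBlocks_zero
        (sbpStiffness_posSemidef hHm.posSemidef hRm_psd)
    rw [hEn']
    exact secondOrderEnergy_nonneg (hHbar ▸ hHp.posSemidef.fromBlocks_zero hHm.posSemidef)
      ((hK_psd.transpose_mul_mul_same P).smul (sq_nonneg c))
  · have hB_psd : Bbar.PosSemidef :=
      ((hHwp_psd.transpose_mul_mul_same ewp).fromBlocks_zero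
          (hHwm_psd.transpose_mul_mul_same ewm)).add
        ((hHep_psd.transpose_mul_mul_same eep).fromBlocks_zero
          (hHem_psd.transpose_mul_mul_same eem))
    rw [hEn']
    refine antitone_secondOrderEnergy hHbar_symm hS_symm hHD hw1 hw2 fun v => ?_
    rw [hHE]
    exact mul_nonpos_of_nonpos_of_nonneg (by linarith) (hB_psd.dotProduct_mulVec_self_nonneg _)

/-- Stability of the SBP-P-SAT scheme: the discrete energy dissipates only through the
west/east boundary terms, and under the semidefiniteness assumptions it is nonnegative
and nonincreasing. -/
theorem twoBlock_energy_stability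
    {Np Nm : ℕ} (hNp : 0 < Np) (hNm : 0 < Nm)
    {mwp mep msp mnp mwm mem msm : ℕ}
    (hmwp : 0 < mwp) (hmep : 0 < mep) (hmsp : 0 < msp) (hmnp : 0 < mnp)
    (hmwm : 0 < mwm) (hmem : 0 < mem) (hmsm : 0 < msm)
    (Hp DLp Dxp Dyp Rp : Matrix (Fin Np) (Fin Np) ℝ)
    (Hm DLm Dxm Dym Rm : Matrix (Fin Nm) (Fin Nm) ℝ)
    (hHp : Hp.PosDef) (hHm : Hm.PosDef) (hRp : Rp.IsSymm) (hRm : Rm.IsSymm)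
    (ewp dwp : Matrix (Fin mwp) (Fin Np) ℝ) (Hwp : Matrix (Fin mwp) (Fin mwp) ℝ)
    (eep dep : Matrix (Fin mep) (Fin Np) ℝ) (Hep : Matrix (Fin mep) (Fin mep) ℝ)
    (esp dsp : Matrix (Fin msp) (Fin Np) ℝ) (Hsp : Matrix (Fin msp) (Fin msp) ℝ)
    (enp dnp : Matrix (Fin mnp) (Fin Np) ℝ) (Hnp : Matrix (Fin mnp) (Fin mnp) ℝ)
    (ewm dwm : Matrix (Fin mwm) (Fin Nm) ℝ) (Hwm : Matrix (Fin mwm) (Fin mwm) ℝ)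
    (eem dem : Matrix (Fin mem) (Fin Nm) ℝ) (Hem : Matrix (Fin mem) (Fin mem) ℝ)
    (esm dsm : Matrix (Fin msm) (Fin Nm) ℝ) (Hsm : Matrix (Fin msm) (Fin msm) ℝ)
    -- interface matching: m_n⁻ = m_s⁺ (same row dimension) and H_n⁻ = H_s⁺
    (enm dnm : Matrix (Fin msp) (Fin Nm) ℝ) (Hnm : Matrix (Fin msp) (Fin msp) ℝ)
    (hHwp : Hwp.IsSymm) (hHep : Hep.IsSymm) (hHsp : Hsp.IsSymm) (hHnp : Hnp.IsSymm)
    (hHwm : Hwm.IsSymm) (hHem : Hem.IsSymm) (hHsm : Hsm.IsSymm) (hHnm : Hnm.IsSymm)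
    (hmatch : Hsp = Hnm)
    (hSBPp : ∀ u v : Fin Np → ℝ,
      u ⬝ᵥ (Hp * DLp) *ᵥ v =
        -((Dxp *ᵥ u) ⬝ᵥ Hp *ᵥ (Dxp *ᵥ v)) - ((Dyp *ᵥ u) ⬝ᵥ Hp *ᵥ (Dyp *ᵥ v))
        - u ⬝ᵥ Rp *ᵥ v
        + (ewp *ᵥ u) ⬝ᵥ Hwp *ᵥ (dwp *ᵥ v) + (eep *ᵥ u) ⬝ᵥ Hep *ᵥ (dep *ᵥ v)
        + (esp *ᵥ u) ⬝ᵥ Hsp *ᵥ (dsp *ᵥ v) + (enp *ᵥ u) ⬝ᵥ Hnp *ᵥ (dnp *ᵥ v))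
    (hSBPm : ∀ u v : Fin Nm → ℝ,
      u ⬝ᵥ (Hm * DLm) *ᵥ v =
        -((Dxm *ᵥ u) ⬝ᵥ Hm *ᵥ (Dxm *ᵥ v)) - ((Dym *ᵥ u) ⬝ᵥ Hm *ᵥ (Dym *ᵥ v))
        - u ⬝ᵥ Rm *ᵥ v
        + (ewm *ᵥ u) ⬝ᵥ Hwm *ᵥ (dwm *ᵥ v) + (eem *ᵥ u) ⬝ᵥ Hem *ᵥ (dem *ᵥ v)
        + (esm *ᵥ u) ⬝ᵥ Hsm *ᵥ (dsm *ᵥ v) + (enm *ᵥ u) ⬝ᵥ Hnm *ᵥ (dnm *ᵥ v))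
    (c : ℝ)
    (Hbar : Matrix (Fin Np ⊕ Fin Nm) (Fin Np ⊕ Fin Nm) ℝ)
    (hHbar : Hbar = fromBlocks Hp 0 0 Hm)
    (L : Matrix (Fin mnp ⊕ Fin msp) (Fin Np ⊕ Fin Nm) ℝ)
    (hL : L = fromBlocks enp 0 esp (-enm))
    (hLHL : IsUnit (L * Hbar⁻¹ * Lᵀ))
    (P : Matrix (Fin Np ⊕ Fin Nm) (Fin Np ⊕ Fin Nm) ℝ)
    (hP : P = 1 - Hbar⁻¹ * Lᵀ * (L * Hbar⁻¹ * Lᵀ)⁻¹ * L)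
    (SATBC1 SATBC2 SATIC : Matrix (Fin Np ⊕ Fin Nm) (Fin Np ⊕ Fin Nm) ℝ)
    (hSATBC1 : SATBC1 = -(Hbar⁻¹ *
      (fromBlocks (ewpᵀ * Hwp * dwp) 0 0 (ewmᵀ * Hwm * dwm)
        + fromBlocks (eepᵀ * Hep * dep) 0 0 (eemᵀ * Hem * dem)
        + fromBlocks 0 0 0 (esmᵀ * Hsm * dsm))))
    (hSATIC : SATIC = -(Hbar⁻¹ *
      fromBlocks (espᵀ * Hsp * dsp) (espᵀ * Hsp * dnm) 0 0))
    (hSATBC2 : SATBC2 = -(Hbar⁻¹ *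
      (fromBlocks (ewpᵀ * Hwp * ewp) 0 0 (ewmᵀ * Hwm * ewm)
        + fromBlocks (eepᵀ * Hep * eep) 0 0 (eemᵀ * Hem * eem))))
    (D E : Matrix (Fin Np ⊕ Fin Nm) (Fin Np ⊕ Fin Nm) ℝ)
    (hD : D = (c ^ 2) • (P * (fromBlocks DLp 0 0 DLm + SATBC1 + SATIC) * P))
    (hE : E = c • (P * SATBC2 * P))
    (w : ℝ → Fin Np ⊕ Fin Nm → ℝ) (hw : ContDiff ℝ 2 w)
    (hode : ∀ t : ℝ, deriv (deriv w) t = D *ᵥ w t + E *ᵥ deriv w t)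
    (En : ℝ → ℝ)
    (hEn : En = fun t =>
      (deriv w t) ⬝ᵥ Hbar *ᵥ (deriv w t)
      + c ^ 2 *
        (((Dxp *ᵥ ((P *ᵥ w t) ∘ Sum.inl)) ⬝ᵥ Hp *ᵥ (Dxp *ᵥ ((P *ᵥ w t) ∘ Sum.inl))
          + (Dyp *ᵥ ((P *ᵥ w t) ∘ Sum.inl)) ⬝ᵥ Hp *ᵥ (Dyp *ᵥ ((P *ᵥ w t) ∘ Sum.inl))
          + ((P *ᵥ w t) ∘ Sum.inl) ⬝ᵥ Rp *ᵥ ((P *ᵥ w t) ∘ Sum.inl))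
        + ((Dxm *ᵥ ((P *ᵥ w t) ∘ Sum.inr)) ⬝ᵥ Hm *ᵥ (Dxm *ᵥ ((P *ᵥ w t) ∘ Sum.inr))
          + (Dym *ᵥ ((P *ᵥ w t) ∘ Sum.inr)) ⬝ᵥ Hm *ᵥ (Dym *ᵥ ((P *ᵥ w t) ∘ Sum.inr))
          + ((P *ᵥ w t) ∘ Sum.inr) ⬝ᵥ Rm *ᵥ ((P *ᵥ w t) ∘ Sum.inr)))) :
    (∀ t : ℝ,
      deriv En t =
        -(2 * c) *
          ((ewp *ᵥ ((P *ᵥ deriv w t) ∘ Sum.inl)) ⬝ᵥ Hwp *ᵥ (ewp *ᵥ ((P *ᵥ deriv w t) ∘ Sum.inl))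
          + (eep *ᵥ ((P *ᵥ deriv w t) ∘ Sum.inl)) ⬝ᵥ Hep *ᵥ (eep *ᵥ ((P *ᵥ deriv w t) ∘ Sum.inl))
          + (ewm *ᵥ ((P *ᵥ deriv w t) ∘ Sum.inr)) ⬝ᵥ Hwm *ᵥ (ewm *ᵥ ((P *ᵥ deriv w t) ∘ Sum.inr))
          + (eem *ᵥ ((P *ᵥ deriv w t) ∘ Sum.inr)) ⬝ᵥ Hem *ᵥ (eem *ᵥ ((P *ᵥ deriv w t) ∘ Sum.inr)))) ∧
    (0 ≤ c → Rp.PosSemidef → Rm.PosSemidef →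
      Hwp.PosSemidef → Hep.PosSemidef → Hwm.PosSemidef → Hem.PosSemidef →
      (∀ t : ℝ, 0 ≤ En t) ∧ Antitone En) :=
  twoBlock_energy_stability_general Hp DLp Dxp Dyp Rp Hm DLm Dxm Dym Rm hHp hHm hRp hRm ewp dwp Hwp
    eep dep Hep esp dsp Hsp enp dnp Hnp ewm dwm Hwm eem dem Hem esm dsm Hsm enm dnm Hnm hmatch hSBPp
    hSBPm c Hbar hHbar L hL hLHL P hP SATBC1 SATBC2 SATIC hSATBC1 hSATIC hSATBC2 D E hD hE w hw hode
    En hEn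
end
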